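/- Let W = X·Y be the product of independent exponential random variables X and Y with means Ω₁ > 0 and Ω₂ > 0. Then for every s > 0, the Laplace transform satisfies E[exp(−s·W)] = (1/(s·Ω₁Ω₂))·exp(1/(s·Ω₁Ω₂))·E₁(1/(s·Ω₁Ω₂)), where E₁(z) = ∫_z^∞ (e^{−t}/t) dt is the exponential integral. -/

import Mathlib

open MeasureTheory ProbabilityTheory Real

/-- The exponential integral `E₁(z) = ∫_z^∞ e^{-t}/t dt`. -/
noncomputable def E1 (z : ℝ) : ℝ :=
  ∫ t in Set.Ioi z, Real.exp (-t) / t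

/-- Density of an exponential random variable with mean `Ω`. -/
noncomputable def expDens (Ω x : ℝ) : ℝ :=
  if 0 ≤ x then 1 / Ω * Real.exp (-x / Ω) else 0

/-!
Conditionally on `X = x ≥ 0`, the Laplace transform of an exponential law gives
`E[exp(-s x Y)] = 1 / (1 + s Ω₂ x)`. Integrating this against the law of `X` and writing
`X = Ω₁ U` with `U` standard exponential leaves `a ∫₀^∞ e^{-u} / (u + a) du` with
`a = 1 / (s Ω₁ Ω₂)`, and the shift `t = u + a` turns this integral into `e^a E₁(a)`.
-/

open Set

theorem ProbabilityTheory.IndepFun.integral_comp_eq_integral_integral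
    {Ω α β E : Type*} [MeasurableSpace Ω] [MeasurableSpace α] [MeasurableSpace β]
    [NormedAddCommGroup E] [NormedSpace ℝ E] {μ : Measure Ω} [IsFiniteMeasure μ]
    {X : Ω → α} {Y : Ω → β} (hXY : IndepFun X Y μ) (hX : AEMeasurable X μ)
    (hY : AEMeasurable Y μ) {f : α × β → E}
    (hf : AEStronglyMeasurable f ((μ.map X).prod (μ.map Y)))
    (hfi : Integrable (fun ω => f (X ω, Y ω)) μ) :
    ∫ ω, f (X ω, Y ω) ∂μ = ∫ x, ∫ y, f (x, y) ∂(μ.map Y) ∂(μ.map X) := by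
  have hmap := hXY.map_prod_eq_prod_map_map hX hY
  have hXY' : AEMeasurable (fun ω => (X ω, Y ω)) μ := hX.prodMk hY
  rw [← hmap] at hf
  rw [← integral_prod _ (hmap ▸ (integrable_map_measure hf hXY').mpr hfi), ← hmap,
    integral_map hXY' hf]

theorem integral_comp_add_right_Ioi {E : Type*} [NormedAddCommGroup E] [NormedSpace ℝ E]
    (f : ℝ → E) (a b : ℝ) :
    ∫ x in Ioi b, f (x + a) = ∫ x in Ioi (b + a), f x := by
  have := (measurePreserving_add_right volume a).setIntegral_preimage_emb
    (measurableEmbedding_addRight a) f (Ioi (b + a))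
  rwa [preimage_add_const_Ioi, add_sub_cancel_right] at this

theorem integral_exp_neg_div_add_eq_exp_mul_E1 (a : ℝ) :
    ∫ u in Ioi 0, exp (-u) / (u + a) = exp a * E1 a := by
  have hshift := integral_comp_add_right_Ioi (fun t => exp (-t) / t) a 0
  rw [zero_add] at hshift
  rw [E1, ← hshift, ← integral_const_mul]
  refine setIntegral_congr_fun measurableSet_Ioi fun u _ => ?_
  rw [neg_add, exp_add, exp_neg a]
  field_simp

noncomputable def expLaw (Ω : ℝ) : Measure ℝ :=
  volume.withDensity fun x => ENNReal.ofReal (expDens Ω x)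

theorem measurable_expDens (Ω : ℝ) : Measurable (expDens Ω) :=
  Measurable.ite measurableSet_Ici (by fun_prop) measurable_const

theorem ae_nonneg_expLaw (Ω : ℝ) : ∀ᵐ x ∂expLaw Ω, 0 ≤ x := by
  refine (ae_withDensity_iff (measurable_expDens Ω).ennreal_ofReal).mpr
    (ae_of_all _ fun x hx => ?_)
  by_contra hneg
  simp [expDens, hneg] at hx

theorem integral_expLaw_eq_setIntegral {Ω : ℝ} (hΩ : 0 < Ω) (f : ℝ → ℝ) :
    ∫ x, f x ∂expLaw Ω = ∫ x in Ioi 0, Ω⁻¹ * exp (-x / Ω) * f x := by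
  rw [expLaw, integral_withDensity_eq_integral_toReal_smul
    (measurable_expDens Ω).ennreal_ofReal (ae_of_all _ fun _ => ENNReal.ofReal_lt_top),
    ← integral_Ici_eq_integral_Ioi,
    ← setIntegral_eq_integral_of_forall_compl_eq_zero (s := Ici 0)]
  · refine setIntegral_congr_fun measurableSet_Ici fun x (hx : 0 ≤ x) => ?_
    simp only [expDens, if_pos hx, smul_eq_mul]
    rw [ENNReal.toReal_ofReal (by positivity), one_div]
  · intro x (hx : ¬ 0 ≤ x)
    simp [expDens, hx]

theorem integral_expLaw {Ω : ℝ} (hΩ : 0 < Ω) (f : ℝ → ℝ) :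
    ∫ x, f x ∂expLaw Ω = ∫ u in Ioi 0, exp (-u) * f (Ω * u) := by
  have hscale := integral_comp_mul_left_Ioi' (fun x => Ω⁻¹ * exp (-x / Ω) * f x) 0 hΩ
  rw [mul_zero] at hscale
  rw [integral_expLaw_eq_setIntegral hΩ, ← hscale, smul_eq_mul, ← integral_const_mul]
  refine setIntegral_congr_fun measurableSet_Ioi fun u _ => ?_
  field_simp

theorem integral_exp_neg_mul_expLaw {Ω c : ℝ} (hΩ : 0 < Ω) (hc : 0 < 1 + c * Ω) :
    ∫ y, exp (-(c * y)) ∂expLaw Ω = (1 + c * Ω)⁻¹ := by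
  rw [integral_expLaw hΩ]
  calc ∫ u in Ioi 0, exp (-u) * exp (-(c * (Ω * u)))
      = ∫ u in Ioi 0, exp (-(1 + c * Ω) * u) :=
        setIntegral_congr_fun measurableSet_Ioi fun u _ => by rw [← exp_add]; ring_nf
    _ = (1 + c * Ω)⁻¹ := by
        rw [integral_exp_mul_Ioi (by linarith) 0]
        field_simp
        simp

theorem integral_inv_one_add_mul_expLaw {Ω c : ℝ} (hΩ : 0 < Ω) (hc : 0 < c) :
    ∫ x, (1 + c * x)⁻¹ ∂expLaw Ω =
      (c * Ω)⁻¹ * exp (c * Ω)⁻¹ * E1 (c * Ω)⁻¹ := by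
  rw [integral_expLaw hΩ, mul_assoc, ← integral_exp_neg_div_add_eq_exp_mul_E1,
    ← integral_const_mul]
  refine setIntegral_congr_fun measurableSet_Ioi fun u (hu : 0 < u) => ?_
  field_simp
  ring

/-- Laplace transform of a product of two independent exponentials:
`E[exp(-s X Y)] = (1/(sΩ₁Ω₂)) exp(1/(sΩ₁Ω₂)) E₁(1/(sΩ₁Ω₂))` for `s > 0`. -/
theorem laplace_product_exponential
    {Ω : Type*} [MeasureSpace Ω] [IsProbabilityMeasure (ℙ : Measure Ω)]
    (X Y : Ω → ℝ) (hX : Measurable X) (hY : Measurable Y)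
    (Ω₁ Ω₂ : ℝ) (hΩ₁ : 0 < Ω₁) (hΩ₂ : 0 < Ω₂)
    (hindep : IndepFun X Y ℙ)
    (hXlaw : Measure.map X ℙ =
      MeasureTheory.volume.withDensity (fun x => ENNReal.ofReal (expDens Ω₁ x)))
    (hYlaw : Measure.map Y ℙ =
      MeasureTheory.volume.withDensity (fun y => ENNReal.ofReal (expDens Ω₂ y)))
    (s : ℝ) (hs : 0 < s) :
    ∫ ω, Real.exp (-s * (X ω * Y ω)) ∂ℙ =
      1 / (s * Ω₁ * Ω₂) * Real.exp (1 / (s * Ω₁ * Ω₂)) * E1 (1 / (s * Ω₁ * Ω₂)) := by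
  change Measure.map X ℙ = expLaw Ω₁ at hXlaw
  change Measure.map Y ℙ = expLaw Ω₂ at hYlaw
  have hX0 : ∀ᵐ ω ∂ℙ, 0 ≤ X ω :=
    ae_of_ae_map hX.aemeasurable (hXlaw ▸ ae_nonneg_expLaw Ω₁)
  have hY0 : ∀ᵐ ω ∂ℙ, 0 ≤ Y ω :=
    ae_of_ae_map hY.aemeasurable (hYlaw ▸ ae_nonneg_expLaw Ω₂)
  have hint : Integrable (fun ω => exp (-s * (X ω * Y ω))) ℙ := by
    refine (integrable_const 1).mono' (by fun_prop) ?_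
    filter_upwards [hX0, hY0] with ω hXω hYω
    rw [norm_of_nonneg (exp_pos _).le, exp_le_one_iff, neg_mul, neg_nonpos]
    exact mul_nonneg hs.le (mul_nonneg hXω hYω)
  calc ∫ ω, exp (-s * (X ω * Y ω)) ∂ℙ
      = ∫ x, ∫ y, exp (-(s * x * y)) ∂expLaw Ω₂ ∂expLaw Ω₁ := by
        rw [hindep.integral_comp_eq_integral_integral (f := fun p => exp (-s * (p.1 * p.2)))
          hX.aemeasurable hY.aemeasurable (by fun_prop) hint, hXlaw, hYlaw]
        simp only [neg_mul, mul_assoc]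
    _ = ∫ x, (1 + s * Ω₂ * x)⁻¹ ∂expLaw Ω₁ := by
        refine integral_congr_ae ((ae_nonneg_expLaw Ω₁).mono fun x hx => ?_)
        dsimp only
        rw [integral_exp_neg_mul_expLaw hΩ₂ (by positivity), mul_right_comm]
    _ = _ := by
        rw [integral_inv_one_add_mul_expLaw hΩ₁ (by positivity), mul_right_comm s,
          one_div]
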